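/- arXiv:1501.07332 — 4 statements merged into one kernel-verified Lean document; each statement's English description precedes it below -/
import Mathlib

section
/- Let f : [0,1] → ℝ be twice continuously differentiable with f''(t) ≥ -C·|f'(t)| for all t ∈ (0,1), where C ≥ 0. Then with M := exp(C) one has, for all t ∈ [0,1] and t' ∈ [0,1): f(t) - f(0) ≤ (M·t/(1-t')) · max(f(1) - f(t'), 0). -/
open Set Filter Topology

/-- On an interval where `f'` is positive, `u ↦ f' u * exp (C u)` is monotone. -/
private lemma gk_psi_mono (f' f'' : ℝ → ℝ) (C : ℝ)
    (hf'' : ∀ t ∈ Icc (0:ℝ) 1, HasDerivAt f' (f'' t) t)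
    (hineq : ∀ t ∈ Ioo (0:ℝ) 1, f'' t ≥ -C * |f' t|)
    {a b : ℝ} (ha : 0 ≤ a) (hb : b ≤ 1)
    (hpos : ∀ u ∈ Ioo a b, 0 < f' u) :
    MonotoneOn (fun u => f' u * Real.exp (C * u)) (Icc a b) := by
  have hsub : Icc a b ⊆ Icc (0:ℝ) 1 := fun x hx => ⟨ha.trans hx.1, hx.2.trans hb⟩
  have hderiv : ∀ x ∈ Icc (0:ℝ) 1,
      HasDerivAt (fun u => f' u * Real.exp (C * u))
        (f'' x * Real.exp (C * x) + f' x * (Real.exp (C * x) * C)) x := by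
    intro x hx
    have h2 : HasDerivAt (fun u : ℝ => Real.exp (C * u)) (Real.exp (C * x) * C) x := by
      have : HasDerivAt (fun u : ℝ => C * u) (C * 1) x := (hasDerivAt_id x).const_mul C
      simpa using this.exp
    exact (hf'' x hx).mul h2
  apply monotoneOn_of_deriv_nonneg (convex_Icc a b)
  · intro x hx
    exact ((hderiv x (hsub hx)).continuousAt.continuousWithinAt)
  · rw [interior_Icc]
    intro x hx
    exact ((hderiv x (hsub (Ioo_subset_Icc_self hx))).differentiableAt).differentiableWithinAt
  · rw [interior_Icc]
    intro x hx
    have hx01 : x ∈ Ioo (0:ℝ) 1 := ⟨lt_of_le_of_lt ha hx.1, lt_of_lt_of_le hx.2 hb⟩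
    rw [(hderiv x (Ioo_subset_Icc_self hx01)).deriv]
    have hfx : 0 < f' x := hpos x hx
    have habs : |f' x| = f' x := abs_of_pos hfx
    have h3 := hineq x hx01
    have hexp : 0 < Real.exp (C * x) := Real.exp_pos _
    have h4 : -C * f' x ≤ f'' x := by rw [habs] at h3; linarith
    nlinarith [mul_le_mul_of_nonneg_right h4 hexp.le]

/-- If `f'` is positive at `s ∈ (0,1]`, then it stays positive on `[s,1]`. -/
private lemma gk_pos_persist (f' f'' : ℝ → ℝ) (C : ℝ)
    (hf'' : ∀ t ∈ Icc (0:ℝ) 1, HasDerivAt f' (f'' t) t)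
    (hineq : ∀ t ∈ Ioo (0:ℝ) 1, f'' t ≥ -C * |f' t|)
    {s : ℝ} (hs0 : 0 < s) (hs1 : s ≤ 1) (hfs : 0 < f' s) :
    ∀ u ∈ Icc s 1, 0 < f' u := by
  have hcontf' : ContinuousOn f' (Icc (0:ℝ) 1) :=
    fun x hx => (hf'' x hx).continuousAt.continuousWithinAt
  by_contra h
  push_neg at h
  obtain ⟨u0, hu0, hu0'⟩ := h
  set T := {u | u ∈ Icc s 1 ∧ f' u ≤ 0} with hT
  have hTsub : T ⊆ Icc s 1 := fun u hu => hu.1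
  have hTeq : T = Icc s 1 ∩ f' ⁻¹' Iic 0 := rfl
  have hclosed : IsClosed T := by
    rw [hTeq]
    exact (hcontf'.mono (Icc_subset_Icc hs0.le le_rfl)).preimage_isClosed_of_isClosed
      isClosed_Icc isClosed_Iic
  have hTc : IsCompact T := isCompact_Icc.of_isClosed_subset hclosed hTsub
  have hne : T.Nonempty := ⟨u0, hu0, hu0'⟩
  have hmem : sInf T ∈ T := hTc.sInf_mem hne
  set τ := sInf T with hτ
  have hτ1 : τ ∈ Icc s 1 := hmem.1
  have hτ2 : f' τ ≤ 0 := hmem.2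
  have hmono := gk_psi_mono f' f'' C hf'' hineq hs0.le hτ1.2
    (fun u hu => by
      by_contra hle
      push_neg at hle
      have huT : u ∈ T := ⟨⟨hu.1.le, hu.2.le.trans hτ1.2⟩, hle⟩
      exact absurd (csInf_le hTc.bddBelow huT) (not_le.2 hu.2))
  have := hmono ⟨le_refl s, hτ1.1⟩ ⟨hτ1.1, le_refl τ⟩ hτ1.1
  simp only at this
  nlinarith [Real.exp_pos (C * s), Real.exp_pos (C * τ), this]

/-- Exponential lower bound for `f'` on `[s,1]`. -/
private lemma gk_exp_bound (f' f'' : ℝ → ℝ) (C : ℝ) (hC : 0 ≤ C)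
    (hf'' : ∀ t ∈ Icc (0:ℝ) 1, HasDerivAt f' (f'' t) t)
    (hineq : ∀ t ∈ Ioo (0:ℝ) 1, f'' t ≥ -C * |f' t|)
    {s D : ℝ} (hs0 : 0 < s) (hs1 : s ≤ 1) (hD : 0 < D) (hfs : D ≤ f' s) :
    ∀ u ∈ Icc s 1, D * Real.exp (-C) ≤ f' u := by
  intro u hu
  have hfs' : 0 < f' s := lt_of_lt_of_le hD hfs
  have hpos := gk_pos_persist f' f'' C hf'' hineq hs0 hs1 hfs'
  have hmono := gk_psi_mono f' f'' C hf'' hineq hs0.le le_rfl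
    (fun v hv => hpos v (Ioo_subset_Icc_self hv))
  have h1 := hmono ⟨le_refl s, hs1⟩ hu hu.1
  simp only at h1
  have hfu : 0 < f' u := hpos u hu
  have hexps : 0 < Real.exp (C * s) := Real.exp_pos _
  have hexpu : 0 < Real.exp (C * u) := Real.exp_pos _
  have h2 : Real.exp (C * u) ≤ Real.exp (C * s) * Real.exp C := by
    rw [← Real.exp_add]
    apply Real.exp_le_exp.2
    nlinarith [hu.2, hs0]
  rw [Real.exp_neg]
  rw [mul_inv_le_iff₀ (Real.exp_pos C)]
  nlinarith [mul_le_mul_of_nonneg_left h2 hfu.le, h1, hfs, hD]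

theorem quantitative_quasiconvexity_estimate
    (f f' f'' : ℝ → ℝ) (C : ℝ) (hC : 0 ≤ C)
    (hf' : ∀ t ∈ Icc (0:ℝ) 1, HasDerivAt f (f' t) t)
    (hf'' : ∀ t ∈ Icc (0:ℝ) 1, HasDerivAt f' (f'' t) t)
    (hcont : ContinuousOn f'' (Icc (0:ℝ) 1))
    (hineq : ∀ t ∈ Ioo (0:ℝ) 1, f'' t ≥ -C * |f' t|) :
    ∀ t ∈ Icc (0:ℝ) 1, ∀ t' ∈ Ico (0:ℝ) 1,
      f t - f 0 ≤ (Real.exp C * t / (1 - t')) * max (f 1 - f t') 0 := by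
  intro t ht t' ht'
  have hM : (0:ℝ) < Real.exp C := Real.exp_pos C
  have h1t' : (0:ℝ) < 1 - t' := by linarith [ht'.2]
  have hRHSnn : 0 ≤ (Real.exp C * t / (1 - t')) * max (f 1 - f t') 0 :=
    mul_nonneg (div_nonneg (mul_nonneg hM.le ht.1) h1t'.le) (le_max_right _ _)
  rcases le_or_gt (f t) (f 0) with hft | hft
  · linarith
  -- now f 0 < f t, hence t > 0
  have h0t : 0 < t := by
    rcases eq_or_lt_of_le ht.1 with h | h
    · exfalso; rw [← h] at hft; exact lt_irrefl _ hft
    · exact h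
  set D := (f t - f 0) / t with hD
  have hDpos : 0 < D := div_pos (by linarith) h0t
  have htD : f t - f 0 = t * D := by rw [hD, mul_comm, div_mul_cancel₀ _ h0t.ne']
  have hcontf : ContinuousOn f (Icc (0:ℝ) 1) :=
    fun x hx => (hf' x hx).continuousAt.continuousWithinAt
  set φ : ℝ → ℝ := fun u => f u - D * u with hφ
  have hKsub : Icc (0:ℝ) t ⊆ Icc (0:ℝ) 1 := Icc_subset_Icc le_rfl ht.2
  have hφcont : ContinuousOn φ (Icc (0:ℝ) t) :=
    (hcontf.mono hKsub).sub (continuousOn_const.mul continuousOn_id)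
  obtain ⟨m, hmK, hmax⟩ := isCompact_Icc.exists_isMaxOn (nonempty_Icc.2 h0t.le) hφcont
  set A := {u | u ∈ Icc (0:ℝ) t ∧ φ u = φ m} with hA
  have hAeq : A = Icc (0:ℝ) t ∩ φ ⁻¹' {φ m} := rfl
  have hAclosed : IsClosed A := by
    rw [hAeq]
    exact hφcont.preimage_isClosed_of_isClosed isClosed_Icc isClosed_singleton
  have hAc : IsCompact A := isCompact_Icc.of_isClosed_subset hAclosed (fun u hu => hu.1)
  have hAne : A.Nonempty := ⟨m, hmK, rfl⟩
  have hsA : sSup A ∈ A := hAc.sSup_mem hAne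
  set s := sSup A with hs
  have hsK : s ∈ Icc (0:ℝ) t := hsA.1
  have hsmax : IsMaxOn φ (Icc (0:ℝ) t) s := fun u hu => (hmax hu).trans_eq hsA.2.symm
  have hφt0 : φ t = φ 0 := by
    simp only [hφ]
    rw [mul_comm D t, ← htD]
    ring
  have hspos : 0 < s := by
    rcases eq_or_lt_of_le hsK.1 with h | h
    · exfalso
      have h0A : φ 0 = φ m := by rw [h]; exact hsA.2
      have htA : t ∈ A := ⟨⟨h0t.le, le_refl t⟩, hφt0.trans h0A⟩
      have := le_csSup hAc.bddAbove htA
      rw [← hs] at this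
      rw [← h] at this
      linarith
    · exact h
  have hs1 : s ∈ Icc (0:ℝ) 1 := ⟨hsK.1, hsK.2.trans ht.2⟩
  -- derivative of φ at points of [0,1]
  have hφd : ∀ x ∈ Icc (0:ℝ) 1, HasDerivAt φ (f' x - D) x := by
    intro x hx
    have : HasDerivAt (fun u : ℝ => D * u) (D * 1) x := (hasDerivAt_id x).const_mul D
    exact (by have h := (hf' x hx).sub this; rw [mul_one] at h; exact h)
  -- f' s ≥ D
  have hf's : D ≤ f' s := by
    rcases eq_or_lt_of_le hsK.2 with hst | hst
    · -- s = t : one-sided derivative argument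
      have hd : HasDerivWithinAt φ (f' s - D) (Iio s) s := (hφd s hs1).hasDerivWithinAt
      rw [hasDerivWithinAt_iff_tendsto_slope] at hd
      have hIio : Iio s \ {s} = Iio s := diff_singleton_eq_self (by simp)
      rw [hIio] at hd
      have hev : ∀ᶠ u in 𝓝[Iio s] s, 0 ≤ slope φ s u := by
        have hmem : Ioi (0:ℝ) ∈ 𝓝[Iio s] s := nhdsWithin_le_nhds (Ioi_mem_nhds hspos)
        filter_upwards [hmem, self_mem_nhdsWithin] with u hu1 hu2
        have huK : u ∈ Icc (0:ℝ) t := ⟨le_of_lt hu1, le_of_lt (lt_of_lt_of_le hu2 hsK.2)⟩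
        have hφu : φ u ≤ φ s := hsmax huK
        rw [slope_def_field]
        have hus : u < s := hu2
        exact div_nonneg_of_nonpos (by linarith) (by linarith)
      have := ge_of_tendsto hd hev
      linarith
    · -- s < t : interior maximum
      have hloc : IsLocalMax φ s := hsmax.isLocalMax (Icc_mem_nhds hspos hst)
      have := hloc.hasDerivAt_eq_zero (hφd s hs1)
      linarith
  -- exponential bound on [s,1]
  have hbound := gk_exp_bound f' f'' C hC hf'' hineq hspos hs1.2 hDpos hf's
  -- integrate: for u in [s,1], f 1 - f u ≥ (1-u) * (D * exp (-C))
  set E := D * Real.exp (-C) with hE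
  have hEpos : 0 < E := mul_pos hDpos (Real.exp_pos _)
  have hkey2 : ∀ u ∈ Icc s 1, (1 - u) * E ≤ f 1 - f u := by
    have hχmono : MonotoneOn (fun u => f u - E * u) (Icc s 1) := by
      apply monotoneOn_of_deriv_nonneg (convex_Icc s 1)
      · exact (hcontf.mono (Icc_subset_Icc hs1.1 le_rfl)).sub
          (continuousOn_const.mul continuousOn_id)
      · rw [interior_Icc]
        intro x hx
        have hx01 : x ∈ Icc (0:ℝ) 1 := ⟨hs1.1.trans hx.1.le, hx.2.le⟩
        have hd : HasDerivAt (fun u => f u - E * u) (f' x - E) x := by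
          have : HasDerivAt (fun u : ℝ => E * u) (E * 1) x := (hasDerivAt_id x).const_mul E
          exact (by have h := (hf' x hx01).sub this; rw [mul_one] at h; exact h)
        exact hd.differentiableAt.differentiableWithinAt
      · rw [interior_Icc]
        intro x hx
        have hx01 : x ∈ Icc (0:ℝ) 1 := ⟨hs1.1.trans hx.1.le, hx.2.le⟩
        have hd : HasDerivAt (fun u => f u - E * u) (f' x - E) x := by
          have : HasDerivAt (fun u : ℝ => E * u) (E * 1) x := (hasDerivAt_id x).const_mul E
          exact (by have h := (hf' x hx01).sub this; rw [mul_one] at h; exact h)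
        rw [hd.deriv]
        have := hbound x ⟨hx.1.le, hx.2.le⟩
        linarith
    intro u hu
    have := hχmono hu ⟨hu.1.trans hu.2, le_refl 1⟩ hu.2
    simp only at this
    nlinarith [this]
  -- main estimate: f 1 - f t' ≥ (1 - t') * E
  have hkey3 : (1 - t') * E ≤ f 1 - f t' := by
    rcases le_or_gt s t' with h | h
    · exact hkey2 t' ⟨h, ht'.2.le⟩
    · have ht'K : t' ∈ Icc (0:ℝ) t := ⟨ht'.1, h.le.trans hsK.2⟩
      have hφ' : φ t' ≤ φ s := hsmax ht'K
      have h2 := hkey2 s ⟨le_refl s, hs1.2⟩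
      have hE1 : Real.exp (-C) ≤ 1 := Real.exp_le_one_iff.2 (by linarith)
      -- φ t' ≤ φ s : f t' - D t' ≤ f s - D s, so f s - f t' ≥ D (s - t') ≥ E (s - t')
      simp only [hφ] at hφ'
      have hED : E ≤ D := by
        rw [hE]; nlinarith [hDpos]
      nlinarith [h.le, hEpos]
  have hmax' : (1 - t') * E ≤ max (f 1 - f t') 0 := hkey3.trans (le_max_left _ _)
  have hEE : Real.exp C * Real.exp (-C) = 1 := by
    rw [← Real.exp_add]; simp
  rw [htD, div_mul_eq_mul_div, le_div_iff₀ h1t']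
  have hfac : 0 ≤ Real.exp C * t := mul_nonneg hM.le ht.1
  have := mul_le_mul_of_nonneg_left hmax' hfac
  calc t * D * (1 - t') = t * D * (1 - t') * (Real.exp C * Real.exp (-C)) := by
        rw [hEE, mul_one]
    _ = Real.exp C * t * ((1 - t') * E) := by rw [hE]; ring
    _ ≤ Real.exp C * t * max (f 1 - f t') 0 := this
end

section
/- Let f : [0,1] → ℝ be twice continuously differentiable with f''(t) ≥ -C·|f'(t)| for all t ∈ (0,1) for some C ≥ 0. Then f has no strict local maximum in the open interval (0,1); that is, there is no t₀ ∈ (0,1) and ε > 0 such that f(t) < f(t₀) for all t ∈ (t₀-ε, t₀+ε) \ {t₀} with t in [0,1]. -/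
open Set

theorem no_strict_local_max
    (f f' f'' : ℝ → ℝ) (C : ℝ) (hC : 0 ≤ C)
    (hf' : ∀ t ∈ Icc (0:ℝ) 1, HasDerivAt f (f' t) t)
    (hf'' : ∀ t ∈ Icc (0:ℝ) 1, HasDerivAt f' (f'' t) t)
    (hcont : ContinuousOn f'' (Icc (0:ℝ) 1))
    (hineq : ∀ t ∈ Ioo (0:ℝ) 1, f'' t ≥ -C * |f' t|) :
    ¬ ∃ t₀ ∈ Ioo (0:ℝ) 1, ∃ ε > (0:ℝ),
      ∀ t ∈ Icc (0:ℝ) 1, t ∈ Ioo (t₀ - ε) (t₀ + ε) → t ≠ t₀ → f t < f t₀ := by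
  rintro ⟨t₀, ht₀, ε, hε, hmax⟩
  obtain ⟨ht₀0, ht₀1⟩ := ht₀
  -- Step 1 : f' t₀ = 0
  have hloc : IsLocalMax f t₀ := by
    have hδ : 0 < min ε (min t₀ (1 - t₀)) := by
      have : 0 < 1 - t₀ := by linarith
      positivity
    filter_upwards [Metric.ball_mem_nhds t₀ hδ] with t ht
    rw [Metric.mem_ball, Real.dist_eq] at ht
    have h1 : |t - t₀| < ε := lt_of_lt_of_le ht (min_le_left _ _)
    have h2 : |t - t₀| < t₀ := lt_of_lt_of_le ht (le_trans (min_le_right _ _) (min_le_left _ _))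
    have h3 : |t - t₀| < 1 - t₀ := lt_of_lt_of_le ht (le_trans (min_le_right _ _) (min_le_right _ _))
    rw [abs_lt] at h1 h2 h3
    by_cases hne : t = t₀
    · simp [hne]
    · exact le_of_lt (hmax t ⟨by linarith, by linarith⟩ ⟨by linarith, by linarith⟩ hne)
  have hft₀ : f' t₀ = 0 := hloc.hasDerivAt_eq_zero (hf' t₀ ⟨le_of_lt ht₀0, le_of_lt ht₀1⟩)
  -- Step 2 : find b with t₀ < b, and use MVT to get c with f' c < 0
  set b : ℝ := min (t₀ + ε / 2) ((t₀ + 1) / 2) with hb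
  have htb : t₀ < b := lt_min (by linarith) (by linarith)
  have hb1 : b < 1 := lt_of_le_of_lt (min_le_right _ _) (by linarith)
  have hbIcc : b ∈ Icc (0:ℝ) 1 := ⟨by linarith, le_of_lt hb1⟩
  have hbε : b < t₀ + ε := lt_of_le_of_lt (min_le_left _ _) (by linarith)
  have hfb : f b < f t₀ :=
    hmax b hbIcc ⟨by linarith, hbε⟩ (ne_of_gt htb)
  have hsub : Icc t₀ b ⊆ Icc (0:ℝ) 1 := Icc_subset_Icc (le_of_lt ht₀0) (le_of_lt hb1)
  have hcf : ContinuousOn f (Icc t₀ b) := fun t ht =>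
    (hf' t (hsub ht)).continuousAt.continuousWithinAt
  obtain ⟨c, hc, hfc⟩ := exists_hasDerivAt_eq_slope f f' htb hcf
    (fun t ht => hf' t (hsub (Ioo_subset_Icc_self ht)))
  have hfc' : f' c < 0 := by
    rw [hfc]
    apply div_neg_of_neg_of_pos <;> linarith [hc.1, hc.2]
  have hc01 : c ∈ Icc (0:ℝ) 1 := hsub (Ioo_subset_Icc_self hc)
  -- Step 3 : s = sup of points in [t₀, c] where f' ≥ 0
  set S : Set ℝ := Icc t₀ c ∩ f' ⁻¹' Ici 0 with hS
  have hSne : S.Nonempty := ⟨t₀, ⟨le_refl _, le_of_lt hc.1⟩, by simp [hft₀]⟩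
  have hSbdd : BddAbove S := ⟨c, fun x hx => hx.1.2⟩
  have hSsub : Icc t₀ c ⊆ Icc (0:ℝ) 1 := Icc_subset_Icc (le_of_lt ht₀0) (le_of_lt (hc.2.trans hb1))
  have hScl : IsClosed S := by
    apply ContinuousOn.preimage_isClosed_of_isClosed _ isClosed_Icc isClosed_Ici
    exact fun t ht => (hf'' t (hSsub ht)).continuousAt.continuousWithinAt
  obtain ⟨hsIcc, hs0⟩ : sSup S ∈ S := hScl.csSup_mem hSne hSbdd
  set s := sSup S with hsdef
  have hs0' : 0 ≤ f' s := hs0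
  have hsc : s < c := lt_of_le_of_ne hsIcc.2 (by
    intro h
    rw [h] at hs0'
    linarith)
  have hneg : ∀ t ∈ Ioo s c, f' t < 0 := by
    intro t ht
    by_contra h
    push_neg at h
    have : t ∈ S := ⟨⟨le_trans hsIcc.1 (le_of_lt ht.1), le_of_lt ht.2⟩, h⟩
    exact absurd (le_csSup hSbdd this) (not_le.mpr ht.1)
  -- Step 4 : u t = exp(-C t) * (- f' t) is antitone on [s, c]
  set u : ℝ → ℝ := fun t => Real.exp (-C * t) * (-f' t) with hu
  have hudv : ∀ t ∈ Icc (0:ℝ) 1,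
      HasDerivAt u (Real.exp (-C * t) * (-C) * (-f' t) + Real.exp (-C * t) * (-f'' t)) t := by
    intro t ht
    have h1 : HasDerivAt (fun t : ℝ => Real.exp (-C * t)) (Real.exp (-C * t) * (-C)) t := by
      simpa using ((hasDerivAt_id t).const_mul (-C)).exp
    have h2 : HasDerivAt (fun t => -f' t) (-f'' t) t := (hf'' t ht).neg
    exact h1.mul h2
  have hIccsub : Icc s c ⊆ Icc (0:ℝ) 1 :=
    Icc_subset_Icc (hSsub hsIcc).1 hc01.2
  have hanti : AntitoneOn u (Icc s c) := by
    apply antitoneOn_of_deriv_nonpos (convex_Icc s c)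
    · exact fun t ht => (hudv t (hIccsub ht)).continuousAt.continuousWithinAt
    · rw [interior_Icc]
      exact fun t ht => ((hudv t (hIccsub (Ioo_subset_Icc_self ht))).differentiableAt).differentiableWithinAt
    · rw [interior_Icc]
      intro t ht
      rw [(hudv t (hIccsub (Ioo_subset_Icc_self ht))).deriv]
      have ht01 : t ∈ Ioo (0:ℝ) 1 :=
        ⟨lt_of_lt_of_le ht₀0 (le_trans hsIcc.1 (le_of_lt ht.1)),
         lt_of_lt_of_le (lt_trans ht.2 hc.2) (le_of_lt hb1)⟩
      have hft : f' t < 0 := hneg t ht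
      have habs : |f' t| = -f' t := abs_of_neg hft
      have := hineq t ht01
      rw [habs] at this
      have hexp : 0 < Real.exp (-C * t) := Real.exp_pos _
      have hkey : C * f' t - f'' t ≤ 0 := by linarith
      nlinarith [mul_nonpos_of_nonneg_of_nonpos (le_of_lt hexp) hkey]
  have huc : 0 < u c := by
    have : 0 < -f' c := by linarith
    exact mul_pos (Real.exp_pos _) this
  have hle : u c ≤ u s := hanti ⟨le_refl s, le_of_lt hsc⟩ ⟨le_of_lt hsc, le_refl c⟩ (le_of_lt hsc)
  have hus : 0 < Real.exp (-C * s) * (-f' s) := lt_of_lt_of_le huc hle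
  nlinarith [Real.exp_pos (-C * s)]
end

section
/- Let φ : [0,T] → ℝ be Lipschitz with φ(0) = 0, φ ≥ 0, and suppose that for almost every s ∈ (0,T) one has s·φ'(s) ≥ (1+β)·φ(s) - C·s^{1+α}, where 0 < β < α ≤ 1 and C > 0. Then for all s ∈ (0,T]: φ(s) ≤ (φ(T)/T^{1+β} + C·T^{α-β}/(α-β)) · s^{1+β}. -/
open Set MeasureTheory

section Aux
open Filter Topology


private lemma tendsto_nat_quot {f : ℝ → ℝ} {c d : ℝ} (hf : HasDerivAt f d c) :
    Tendsto (fun n : ℕ => ((n : ℝ) + 1) * (f (c + ((n : ℝ) + 1)⁻¹) - f c)) atTop (𝓝 d) := by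
  rw [hasDerivAt_iff_tendsto_slope] at hf
  have h0 : Tendsto (fun n : ℕ => c + ((n : ℝ) + 1)⁻¹) atTop (𝓝[≠] c) := by
    apply tendsto_nhdsWithin_of_tendsto_nhds_of_eventually_within
    · have h1 : Tendsto (fun n : ℕ => ((n : ℝ) + 1)⁻¹) atTop (𝓝 0) := by
        simpa [one_div] using tendsto_one_div_add_atTop_nhds_zero_nat (𝕜 := ℝ)
      simpa using tendsto_const_nhds.add h1
    · filter_upwards with n
      have hpos : (0 : ℝ) < ((n : ℝ) + 1)⁻¹ := by positivity
      simp only [mem_compl_iff, mem_singleton_iff]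
      intro hco; nlinarith [hco]
  have H := hf.comp h0
  convert H using 2 with n
  have hne : ((n : ℝ) + 1)⁻¹ ≠ 0 := by positivity
  simp only [Function.comp_apply, slope_def_field]
  field_simp
  ring

private lemma lip_mono_global {g : ℝ → ℝ} {K : NNReal} (hg : LipschitzWith K g) {a b : ℝ}
    (hab : a ≤ b)
    (h : ∀ᵐ t ∂(volume.restrict (Ioo a b)), ∃ d, 0 ≤ d ∧ HasDerivAt g d t) : g a ≤ g b := by
  have cont : Continuous g := hg.continuous
  have hint : ∀ c d : ℝ, IntervalIntegrable g volume c d := fun c d => cont.intervalIntegrable c d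
  set u : ℕ → ℝ := fun n => ((n : ℝ) + 1)⁻¹ with hu
  have hupos : ∀ n : ℕ, 0 < u n := fun n => by positivity
  have humul : ∀ n : ℕ, ((n : ℝ) + 1) * u n = 1 := fun n => by
    simp only [hu]; field_simp
  -- endpoint limits
  have Hend : ∀ c : ℝ, Tendsto (fun n : ℕ => ((n : ℝ) + 1) * ∫ t in c..(c + u n), g t)
      atTop (𝓝 (g c)) := by
    intro c
    have HD : HasDerivAt (fun x => ∫ t in c..x, g t) (g c) c :=
      intervalIntegral.integral_hasDerivAt_right (hint c c)
        (cont.stronglyMeasurableAtFilter _ _) cont.continuousAt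
    have H := tendsto_nat_quot HD
    simpa using H
  -- rewrite the integral of difference quotients
  have key : ∀ n : ℕ, (∫ t in Ioo a b, ((n : ℝ) + 1) * (g (t + u n) - g t))
      = ((n : ℝ) + 1) * ((∫ t in b..(b + u n), g t) - ∫ t in a..(a + u n), g t) := by
    intro n
    have conv : (∫ t in Ioo a b, ((n : ℝ) + 1) * (g (t + u n) - g t))
        = ∫ t in a..b, ((n : ℝ) + 1) * (g (t + u n) - g t) := by
      rw [intervalIntegral.integral_of_le hab, integral_Ioc_eq_integral_Ioo]
    have hshift : Continuous (fun t : ℝ => g (t + u n)) :=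
      cont.comp (continuous_id.add continuous_const)
    have e1 : (∫ t in a..b, ((n : ℝ) + 1) * (g (t + u n) - g t))
        = ((n : ℝ) + 1) * ∫ t in a..b, (g (t + u n) - g t) := by
      rw [intervalIntegral.integral_const_mul]
    have e2 : (∫ t in a..b, (g (t + u n) - g t))
        = (∫ t in a..b, g (t + u n)) - ∫ t in a..b, g t :=
      intervalIntegral.integral_sub (hshift.intervalIntegrable a b) (hint a b)
    have e3 : (∫ t in a..b, g (t + u n)) = ∫ t in (a + u n)..(b + u n), g t :=
      intervalIntegral.integral_comp_add_right g (u n)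
    have h1 : (∫ t in a..(a + u n), g t) + ∫ t in (a + u n)..(b + u n), g t
        = ∫ t in a..(b + u n), g t :=
      intervalIntegral.integral_add_adjacent_intervals (hint _ _) (hint _ _)
    have h2 : (∫ t in a..b, g t) + ∫ t in b..(b + u n), g t = ∫ t in a..(b + u n), g t :=
      intervalIntegral.integral_add_adjacent_intervals (hint _ _) (hint _ _)
    rw [conv, e1, e2, e3]
    have h3 : (∫ t in (a + u n)..(b + u n), g t) - ∫ t in a..b, g t
        = (∫ t in b..(b + u n), g t) - ∫ t in a..(a + u n), g t := by linarith
    rw [h3]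
  -- dominated convergence
  have meas_n : ∀ n : ℕ, AEStronglyMeasurable (fun t => ((n : ℝ) + 1) * (g (t + u n) - g t))
      (volume.restrict (Ioo a b)) := by
    intro n
    exact ((continuous_const.mul ((cont.comp (continuous_id.add continuous_const)).sub
      cont))).aestronglyMeasurable
  have bound : ∀ n : ℕ, ∀ᵐ t ∂(volume.restrict (Ioo a b)),
      ‖((n : ℝ) + 1) * (g (t + u n) - g t)‖ ≤ (K : ℝ) := by
    intro n
    filter_upwards with t
    have hd : dist (g (t + u n)) (g t) ≤ (K : ℝ) * dist (t + u n) t := hg.dist_le_mul _ _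
    rw [Real.dist_eq, Real.dist_eq] at hd
    have hdt : |t + u n - t| = u n := by
      rw [add_sub_cancel_left, abs_of_pos (hupos n)]
    rw [hdt] at hd
    have hn1 : (0:ℝ) ≤ (n : ℝ) + 1 := by positivity
    rw [norm_mul, Real.norm_eq_abs, Real.norm_eq_abs, abs_of_nonneg hn1]
    calc ((n : ℝ) + 1) * |g (t + u n) - g t| ≤ ((n : ℝ) + 1) * ((K : ℝ) * u n) := by
          exact mul_le_mul_of_nonneg_left hd hn1
      _ = (K : ℝ) := by rw [show ((n:ℝ)+1) * ((K:ℝ) * u n) = (K:ℝ) * (((n:ℝ)+1) * u n) by ring,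
            humul n, mul_one]
  have bddint : Integrable (fun _ : ℝ => (K : ℝ)) (volume.restrict (Ioo a b)) := by
    exact integrableOn_const measure_Ioo_lt_top.ne
  have limp : ∀ᵐ t ∂(volume.restrict (Ioo a b)),
      Tendsto (fun n : ℕ => ((n : ℝ) + 1) * (g (t + u n) - g t)) atTop (𝓝 (deriv g t)) := by
    filter_upwards [h] with t ht
    obtain ⟨d, _, hder⟩ := ht
    rw [hder.deriv]
    exact tendsto_nat_quot hder
  have DCT := tendsto_integral_of_dominated_convergence (fun _ => (K : ℝ)) meas_n bddint bound limp
  -- the other limit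
  have other : Tendsto (fun n : ℕ => ∫ t in Ioo a b, ((n : ℝ) + 1) * (g (t + u n) - g t))
      atTop (𝓝 (g b - g a)) := by
    have := (Hend b).sub (Hend a)
    apply this.congr
    intro n
    rw [key n]
    ring
  have heq : (∫ t in Ioo a b, deriv g t) = g b - g a := tendsto_nhds_unique DCT other
  have hnn : 0 ≤ ∫ t in Ioo a b, deriv g t := by
    apply integral_nonneg_of_ae
    filter_upwards [h] with t ht
    obtain ⟨d, hd0, hder⟩ := ht
    rw [hder.deriv]; exact hd0
  linarith [heq ▸ hnn]

private lemma lip_mono_on {g : ℝ → ℝ} {K : NNReal} {a b : ℝ} (hab : a ≤ b)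
    (hg : LipschitzOnWith K g (Icc a b))
    (h : ∀ᵐ t ∂(volume.restrict (Ioo a b)), ∃ d, 0 ≤ d ∧ HasDerivAt g d t) : g a ≤ g b := by
  obtain ⟨G, hG, hGg⟩ := hg.extend_real
  have ha : g a = G a := hGg (left_mem_Icc.2 hab)
  have hb : g b = G b := hGg (right_mem_Icc.2 hab)
  rw [ha, hb]
  apply lip_mono_global hG hab
  have hmem : ∀ᵐ t ∂(volume.restrict (Ioo a b)), t ∈ Ioo a b :=
    ae_restrict_mem measurableSet_Ioo
  filter_upwards [h, hmem] with t ht htm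
  obtain ⟨d, hd0, hder⟩ := ht
  refine ⟨d, hd0, ?_⟩
  have hev : g =ᶠ[𝓝 t] G := by
    have : Icc a b ∈ 𝓝 t := Icc_mem_nhds htm.1 htm.2
    filter_upwards [this] with x hx
    exact hGg hx
  exact hder.congr_of_eventuallyEq hev.symm


end Aux

theorem forzani_maldonado_integration
    (φ φ' : ℝ → ℝ) (T : ℝ) (hT : 0 < T) (K : NNReal)
    (hlip : LipschitzOnWith K φ (Icc 0 T))
    (hφ0 : φ 0 = 0) (hφnonneg : ∀ s ∈ Icc (0:ℝ) T, 0 ≤ φ s)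
    (α β C : ℝ) (hβ : 0 < β) (hβα : β < α) (hα : α ≤ 1) (hC : 0 < C)
    (hae : ∀ᵐ s ∂(volume.restrict (Ioo (0:ℝ) T)),
      HasDerivAt φ (φ' s) s ∧ s * φ' s ≥ (1 + β) * φ s - C * s ^ (1 + α)) :
    ∀ s ∈ Ioc (0:ℝ) T,
      φ s ≤ (φ T / T ^ (1 + β) + C * T ^ (α - β) / (α - β)) * s ^ (1 + β) := by
  intro s hs
  obtain ⟨hs0, hsT⟩ := hs
  have hq : (0:ℝ) < α - β := sub_pos.2 hβα
  have hq1 : α - β - 1 ≤ 0 := by linarith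
  have hr1 : -(1 + β) - 1 ≤ 0 := by linarith
  have hrneg : -(1 + β) ≤ 0 := by linarith
  set c : ℝ := C / (α - β) with hcdef
  have hc : 0 < c := div_pos hC hq
  have hcq : c * (α - β) = C := div_mul_cancel₀ C hq.ne'
  set g : ℝ → ℝ := fun x => φ x * x ^ (-(1 + β)) + c * x ^ (α - β) with hgdef
  -- bounds for Lipschitz estimate on Icc s T
  have hmemsub : Icc s T ⊆ Icc 0 T := Icc_subset_Icc hs0.le le_rfl
  have hxpos : ∀ x ∈ Icc s T, 0 < x := fun x hx => lt_of_lt_of_le hs0 hx.1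
  have hMφ : ∀ x ∈ Icc s T, |φ x| ≤ (K:ℝ) * T := by
    intro x hx
    have h0m : (0:ℝ) ∈ Icc (0:ℝ) T := ⟨le_rfl, hT.le⟩
    have hd := hlip.dist_le_mul x (hmemsub hx) 0 h0m
    rw [Real.dist_eq, Real.dist_eq, hφ0, sub_zero, sub_zero] at hd
    calc |φ x| ≤ (K:ℝ) * |x| := hd
      _ ≤ (K:ℝ) * T := by
          have : |x| ≤ T := by
            rw [abs_of_pos (hxpos x hx)]; exact hx.2
          exact mul_le_mul_of_nonneg_left this K.coe_nonneg
  have hanti : ∀ (e : ℝ), e ≤ 0 → ∀ x ∈ Icc s T, x ^ e ≤ s ^ e := by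
    intro e he x hx
    exact Real.rpow_le_rpow_of_nonpos hs0 hx.1 he
  -- Lipschitz constants for the power pieces
  set Lu : ℝ := (1 + β) * s ^ (-(1 + β) - 1) with hLu
  set Lq : ℝ := (α - β) * s ^ (α - β - 1) with hLq
  have hLu0 : 0 ≤ Lu := by positivity
  have hLq0 : 0 ≤ Lq := by positivity
  have hulip : ∀ x ∈ Icc s T, ∀ y ∈ Icc s T,
      |(fun z : ℝ => z ^ (-(1 + β))) x - (fun z : ℝ => z ^ (-(1 + β))) y| ≤ Lu * |x - y| := by
    intro x hx y hy
    have hH : ∀ z ∈ Icc s T, HasDerivWithinAt (fun w : ℝ => w ^ (-(1 + β)))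
        ((-(1 + β)) * z ^ (-(1 + β) - 1)) (Icc s T) z := fun z hz =>
      (Real.hasDerivAt_rpow_const (Or.inl (hxpos z hz).ne')).hasDerivWithinAt
    have hb : ∀ z ∈ Icc s T, ‖(-(1 + β)) * z ^ (-(1 + β) - 1)‖ ≤ Lu := by
      intro z hz
      rw [Real.norm_eq_abs, abs_mul, abs_of_nonpos (by linarith : -(1+β) ≤ 0),
        abs_of_nonneg (Real.rpow_nonneg (hxpos z hz).le _)]
      have := hanti _ hr1 z hz
      rw [hLu]; nlinarith
    have := Convex.norm_image_sub_le_of_norm_hasDerivWithin_le hH hb (convex_Icc s T) hy hx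
    rw [Real.norm_eq_abs, Real.norm_eq_abs] at this
    exact this
  have hqlip : ∀ x ∈ Icc s T, ∀ y ∈ Icc s T,
      |(fun z : ℝ => z ^ (α - β)) x - (fun z : ℝ => z ^ (α - β)) y| ≤ Lq * |x - y| := by
    intro x hx y hy
    have hH : ∀ z ∈ Icc s T, HasDerivWithinAt (fun w : ℝ => w ^ (α - β))
        ((α - β) * z ^ (α - β - 1)) (Icc s T) z := fun z hz =>
      (Real.hasDerivAt_rpow_const (Or.inl (hxpos z hz).ne')).hasDerivWithinAt
    have hb : ∀ z ∈ Icc s T, ‖(α - β) * z ^ (α - β - 1)‖ ≤ Lq := by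
      intro z hz
      rw [Real.norm_eq_abs, abs_mul, abs_of_pos hq,
        abs_of_nonneg (Real.rpow_nonneg (hxpos z hz).le _)]
      have := hanti _ hq1 z hz
      rw [hLq]; nlinarith
    have := Convex.norm_image_sub_le_of_norm_hasDerivWithin_le hH hb (convex_Icc s T) hy hx
    rw [Real.norm_eq_abs, Real.norm_eq_abs] at this
    exact this
  have hφlip2 : ∀ x ∈ Icc s T, ∀ y ∈ Icc s T, |φ x - φ y| ≤ (K:ℝ) * |x - y| := by
    intro x hx y hy
    have := hlip.dist_le_mul x (hmemsub hx) y (hmemsub hy)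
    rwa [Real.dist_eq, Real.dist_eq] at this
  set M : ℝ := (K:ℝ) * s ^ (-(1 + β)) + ((K:ℝ) * T) * Lu + c * Lq with hM
  have hM0 : 0 ≤ M := by positivity
  have hglip : LipschitzOnWith M.toNNReal g (Icc s T) := by
    apply LipschitzOnWith.of_dist_le_mul
    intro x hx y hy
    rw [Real.dist_eq, Real.dist_eq, Real.coe_toNNReal _ hM0]
    have e : g x - g y = φ x * (x ^ (-(1+β)) - y ^ (-(1+β)))
        + y ^ (-(1+β)) * (φ x - φ y) + c * (x ^ (α-β) - y ^ (α-β)) := by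
      simp only [hgdef]; ring
    rw [e]
    have t1 : |φ x * (x ^ (-(1+β)) - y ^ (-(1+β)))| ≤ ((K:ℝ) * T) * (Lu * |x - y|) := by
      rw [abs_mul]
      exact mul_le_mul (hMφ x hx) (hulip x hx y hy) (abs_nonneg _)
        (by positivity)
    have t2 : |y ^ (-(1+β)) * (φ x - φ y)| ≤ s ^ (-(1+β)) * ((K:ℝ) * |x - y|) := by
      rw [abs_mul]
      have hy1 : |(y:ℝ) ^ (-(1+β))| ≤ s ^ (-(1+β)) := by
        rw [abs_of_nonneg (Real.rpow_nonneg (hxpos y hy).le _)]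
        exact hanti _ hrneg y hy
      exact mul_le_mul hy1 (hφlip2 x hx y hy) (abs_nonneg _) (by positivity)
    have t3 : |c * (x ^ (α-β) - y ^ (α-β))| ≤ c * (Lq * |x - y|) := by
      rw [abs_mul, abs_of_pos hc]
      exact mul_le_mul_of_nonneg_left (hqlip x hx y hy) hc.le
    calc |φ x * (x ^ (-(1+β)) - y ^ (-(1+β))) + y ^ (-(1+β)) * (φ x - φ y)
          + c * (x ^ (α-β) - y ^ (α-β))|
        ≤ |φ x * (x ^ (-(1+β)) - y ^ (-(1+β))) + y ^ (-(1+β)) * (φ x - φ y)|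
          + |c * (x ^ (α-β) - y ^ (α-β))| := abs_add_le _ _
      _ ≤ |φ x * (x ^ (-(1+β)) - y ^ (-(1+β)))| + |y ^ (-(1+β)) * (φ x - φ y)|
          + |c * (x ^ (α-β) - y ^ (α-β))| := by linarith [abs_add_le (φ x * (x ^ (-(1+β)) - y ^ (-(1+β)))) (y ^ (-(1+β)) * (φ x - φ y))]
      _ ≤ M * |x - y| := by rw [hM]; nlinarith [t1, t2, t3]
  -- a.e. nonnegative derivative of g on Ioo s T
  have hae2 : ∀ᵐ t ∂(volume.restrict (Ioo s T)), ∃ d, 0 ≤ d ∧ HasDerivAt g d t := by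
    have hsub := ae_restrict_of_ae_restrict_of_subset (Ioo_subset_Ioo hs0.le le_rfl) hae
    have hmem : ∀ᵐ t ∂(volume.restrict (Ioo s T)), t ∈ Ioo s T :=
      ae_restrict_mem measurableSet_Ioo
    filter_upwards [hsub, hmem] with t ht htm
    obtain ⟨hder, hineq⟩ := ht
    have ht0 : 0 < t := lt_trans hs0 htm.1
    have h1 : HasDerivAt (fun x : ℝ => x ^ (-(1+β))) ((-(1+β)) * t ^ (-(1+β) - 1)) t :=
      Real.hasDerivAt_rpow_const (Or.inl ht0.ne')
    have h2 : HasDerivAt (fun x : ℝ => x ^ (α-β)) ((α-β) * t ^ (α-β-1)) t :=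
      Real.hasDerivAt_rpow_const (Or.inl ht0.ne')
    refine ⟨φ' t * t ^ (-(1+β)) + φ t * ((-(1+β)) * t ^ (-(1+β) - 1))
      + c * ((α-β) * t ^ (α-β-1)), ?_, (hder.mul h1).add (h2.const_mul c)⟩
    -- nonnegativity
    set P : ℝ := t ^ (-(1+β) - 1) with hP
    have hPpos : 0 < P := Real.rpow_pos_of_pos ht0 _
    have e1 : t ^ (-(1+β)) = P * t := by
      rw [hP, ← Real.rpow_add_one ht0.ne' (-(1+β) - 1)]
      congr 1; ring
    have e2 : P * t ^ (1 + α) = t ^ (α - β - 1) := by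
      rw [hP, ← Real.rpow_add ht0]
      congr 1; ring
    have hmul : P * ((1+β) * φ t - C * t ^ (1+α)) ≤ P * (t * φ' t) :=
      mul_le_mul_of_nonneg_left hineq hPpos.le
    have hceq : c * ((α-β) * t ^ (α-β-1)) = C * t ^ (α-β-1) := by
      rw [← hcq]; ring
    rw [e1, hceq, ← e2]
    nlinarith [hmul]
  -- monotonicity
  have hmono : g s ≤ g T := lip_mono_on hsT hglip hae2
  -- final algebra
  have hspow : 0 < s ^ (1 + β) := Real.rpow_pos_of_pos hs0 _
  have hTpow : 0 < T ^ (1 + β) := Real.rpow_pos_of_pos hT _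
  have hsinv : s ^ (-(1+β)) = (s ^ (1+β))⁻¹ := Real.rpow_neg hs0.le _
  have hTinv : T ^ (-(1+β)) = (T ^ (1+β))⁻¹ := Real.rpow_neg hT.le _
  have hsnn : 0 ≤ c * s ^ (α - β) := by positivity
  have hkey : φ s * s ^ (-(1+β)) ≤ φ T / T ^ (1+β) + C * T ^ (α-β) / (α-β) := by
    have hgs : g s = φ s * s ^ (-(1+β)) + c * s ^ (α-β) := rfl
    have hgT : g T = φ T * T ^ (-(1+β)) + c * T ^ (α-β) := rfl
    have e3 : φ T * T ^ (-(1+β)) = φ T / T ^ (1+β) := by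
      rw [hTinv, div_eq_mul_inv]
    have e4 : c * T ^ (α-β) = C * T ^ (α-β) / (α-β) := by
      rw [hcdef]; ring
    rw [hgs, hgT, e3, e4] at hmono
    linarith
  calc φ s = (φ s * s ^ (-(1+β))) * s ^ (1+β) := by
        rw [hsinv]; field_simp
    _ ≤ (φ T / T ^ (1+β) + C * T ^ (α-β) / (α-β)) * s ^ (1+β) :=
        mul_le_mul_of_nonneg_right hkey hspow.le
end

section
/- Let v₁, …, vₙ ∈ ℝⁿ, let e₁, …, eₙ be an orthonormal basis, and suppose ‖ vᵢ/‖vᵢ‖ - eᵢ ‖ < 1/(2√n) for every i, with each vᵢ ≠ 0. Then v₁, …, vₙ are linearly independent, and the volume of the parallelepiped spanned by v₁, …, vₙ is at least c(n) · ∏ᵢ ‖vᵢ‖ for a positive constant c(n) depending only on n. -/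
set_option maxHeartbeats 1000000
open scoped Matrix.Norms.L2Operator

/-- Coordinate of a Euclidean vector is at most its norm. -/
lemma euclid_coord_le_norm {n : ℕ} (y : EuclideanSpace ℝ (Fin n)) (i : Fin n) :
    |y i| ≤ ‖y‖ := by
  rw [EuclideanSpace.norm_eq]
  have h1 : |y i| = Real.sqrt (‖y i‖ ^ 2) := by
    rw [Real.sqrt_sq (norm_nonneg _), Real.norm_eq_abs]
  rw [h1]
  exact Real.sqrt_le_sqrt (Finset.single_le_sum (f := fun j => ‖y j‖ ^ 2)
    (fun j _ => sq_nonneg _) (Finset.mem_univ i))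

/-- Matrix entries are bounded by the l2 operator norm. -/
lemma entry_abs_le_l2_opNorm {n : ℕ} (A : Matrix (Fin n) (Fin n) ℝ) (i j : Fin n) :
    |A i j| ≤ ‖A‖ := by
  have h := A.l2_opNorm_mulVec ((WithLp.equiv 2 (Fin n → ℝ)).symm (Pi.single j 1))
  have hx : ‖(WithLp.equiv 2 (Fin n → ℝ)).symm (Pi.single j 1)‖ = 1 := by
    simpa using EuclideanSpace.norm_single (𝕜 := ℝ) j (1:ℝ)
  rw [hx, mul_one] at h
  refine le_trans ?_ h
  have hy : ((EuclideanSpace.equiv (Fin n) ℝ).symm <|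
      A.mulVec ((WithLp.equiv 2 (Fin n → ℝ)).symm (Pi.single j 1))) i = A i j := by
    show A.mulVec (Pi.single j 1) i = A i j
    simp [Matrix.mulVec_single]
  calc |A i j| = |((EuclideanSpace.equiv (Fin n) ℝ).symm <|
      A.mulVec ((WithLp.equiv 2 (Fin n → ℝ)).symm (Pi.single j 1))) i| := by rw [hy]
    _ ≤ _ := euclid_coord_le_norm _ i

/-- Row l2 norms bound the l2 operator norm, up to a factor √n. -/
lemma l2_opNorm_le_of_rows {n : ℕ} (A : Matrix (Fin n) (Fin n) ℝ) (c : ℝ) (hc : 0 ≤ c)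
    (h : ∀ i, ∑ j, (A i j) ^ 2 ≤ c ^ 2) : ‖A‖ ≤ Real.sqrt n * c := by
  rw [Matrix.l2_opNorm_def]
  refine ContinuousLinearMap.opNorm_le_bound _ (by positivity) ?_
  intro x
  set y : EuclideanSpace ℝ (Fin n) := (Matrix.toEuclideanLin A) x with hydef
  have hyi : ∀ i, y i = ∑ j, A i j * x j := fun i => rfl
  have hnormy : ‖y‖ ^ 2 = ∑ i, (y i) ^ 2 := by
    rw [EuclideanSpace.norm_eq, Real.sq_sqrt (Finset.sum_nonneg fun i _ => sq_nonneg _)]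
    simp [sq_abs]
  have hnormx : ∑ j, (x j) ^ 2 = ‖x‖ ^ 2 := by
    rw [EuclideanSpace.norm_eq, Real.sq_sqrt (Finset.sum_nonneg fun i _ => sq_nonneg _)]
    simp [sq_abs]
  have hb : ‖y‖ ^ 2 ≤ (Real.sqrt n * c * ‖x‖) ^ 2 := by
    rw [hnormy]
    have : ∀ i, (y i) ^ 2 ≤ c ^ 2 * ‖x‖ ^ 2 := by
      intro i
      rw [hyi]
      calc (∑ j, A i j * x j) ^ 2 ≤ (∑ j, (A i j) ^ 2) * ∑ j, (x j) ^ 2 :=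
            Finset.sum_mul_sq_le_sq_mul_sq _ _ _
        _ ≤ c ^ 2 * ‖x‖ ^ 2 := by
            rw [hnormx]; exact mul_le_mul_of_nonneg_right (h i) (sq_nonneg _)
    calc ∑ i, (y i) ^ 2 ≤ ∑ _i : Fin n, c ^ 2 * ‖x‖ ^ 2 :=
          Finset.sum_le_sum fun i _ => this i
      _ = n * (c ^ 2 * ‖x‖ ^ 2) := by simp [Finset.sum_const, mul_comm]
      _ = (Real.sqrt n * c * ‖x‖) ^ 2 := by
          rw [mul_pow, mul_pow, Real.sq_sqrt (Nat.cast_nonneg n)]; ring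
  calc ‖((Matrix.toEuclideanLin ≪≫ₗ LinearMap.toContinuousLinearMap) A) x‖ = ‖y‖ := rfl
    _ = Real.sqrt (‖y‖ ^ 2) := (Real.sqrt_sq (norm_nonneg _)).symm
    _ ≤ Real.sqrt ((Real.sqrt n * c * ‖x‖) ^ 2) := Real.sqrt_le_sqrt hb
    _ = Real.sqrt n * c * ‖x‖ := Real.sqrt_sq (by positivity)

theorem almost_orthonormal_parallelepiped_volume (n : ℕ) :
    ∃ c > (0:ℝ), ∀ (v : Fin n → EuclideanSpace ℝ (Fin n))
      (e : OrthonormalBasis (Fin n) ℝ (EuclideanSpace ℝ (Fin n))),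
      (∀ i, v i ≠ 0) →
      (∀ i, ‖‖v i‖⁻¹ • v i - e i‖ < 1 / (2 * Real.sqrt n)) →
      LinearIndependent ℝ v ∧
      c * ∏ i, ‖v i‖ ≤ |(Matrix.of fun i j => e.repr (v i) j).det| := by
  classical
  refine ⟨((n.factorial : ℝ) * 2 ^ n)⁻¹, by positivity, ?_⟩
  intro v e hv hclose
  rcases Nat.eq_zero_or_pos n with hn | hn
  · subst hn
    refine ⟨linearIndependent_empty_type, ?_⟩
    simp [Matrix.det_isEmpty]
  have hsn : (0:ℝ) < Real.sqrt n := Real.sqrt_pos.mpr (by exact_mod_cast hn)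
  set u : Fin n → EuclideanSpace ℝ (Fin n) := fun i => ‖v i‖⁻¹ • v i with hu
  set N : Matrix (Fin n) (Fin n) ℝ := Matrix.of (fun i j => e.repr (u i) j) with hN
  set E : Matrix (Fin n) (Fin n) ℝ := N - 1 with hEdef
  -- rows of E
  have hrow : ∀ i j, E i j = e.repr (u i - e i) j := by
    intro i j
    have : e.repr (u i - e i) j = e.repr (u i) j - e.repr (e i) j := by
      rw [map_sub]; rfl
    rw [this, OrthonormalBasis.repr_self]
    simp only [hEdef, Matrix.sub_apply, Matrix.one_apply, hN, Matrix.of_apply,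
      EuclideanSpace.single_apply]
    by_cases hij : i = j <;> simp [hij, eq_comm]
  have hrowsum : ∀ i, ∑ j, (E i j) ^ 2 ≤ (1 / (2 * Real.sqrt n)) ^ 2 := by
    intro i
    have h1 : ∑ j, (E i j) ^ 2 = ‖e.repr (u i - e i)‖ ^ 2 := by
      rw [EuclideanSpace.norm_eq, Real.sq_sqrt (Finset.sum_nonneg fun j _ => sq_nonneg _)]
      simp only [Real.norm_eq_abs, sq_abs]
      exact Finset.sum_congr rfl fun j _ => by rw [hrow i j]
    rw [h1, e.repr.norm_map]
    exact pow_le_pow_left₀ (norm_nonneg _) (le_of_lt (hclose i)) 2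
  have hEnorm : ‖E‖ ≤ 1 / 2 := by
    have := l2_opNorm_le_of_rows E (1 / (2 * Real.sqrt n)) (by positivity) hrowsum
    calc ‖E‖ ≤ Real.sqrt n * (1 / (2 * Real.sqrt n)) := this
      _ = 1 / 2 := by
        rw [mul_one_div, div_eq_div_iff (by positivity) (by norm_num)]
        ring
  have hE1 : ‖-E‖ < 1 := by rw [norm_neg]; linarith
  set U : (Matrix (Fin n) (Fin n) ℝ)ˣ := Units.oneSub (-E) hE1 with hU
  have hUval : (U : Matrix (Fin n) (Fin n) ℝ) = N := by
    simp [hU, Units.val_oneSub, sub_neg_eq_add, hEdef]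
  have hNunit : IsUnit N := hUval ▸ U.isUnit
  -- M = diagonal * N
  set M : Matrix (Fin n) (Fin n) ℝ := Matrix.of (fun i j => e.repr (v i) j) with hM
  have hMD : M = Matrix.diagonal (fun i => ‖v i‖) * N := by
    ext i j
    rw [Matrix.diagonal_mul]
    show e.repr (v i) j = ‖v i‖ * e.repr (u i) j
    have hvi : v i = ‖v i‖ • u i := by
      rw [hu]
      rw [smul_smul, mul_inv_cancel₀ (norm_ne_zero_iff.mpr (hv i)), one_smul]
    conv_lhs => rw [hvi]
    rw [map_smul]
    rfl
  have hDunit : IsUnit (Matrix.diagonal (fun i => ‖v i‖)) := by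
    rw [Matrix.isUnit_iff_isUnit_det, Matrix.det_diagonal]
    exact isUnit_iff_ne_zero.mpr (Finset.prod_ne_zero_iff.mpr
      fun i _ => norm_ne_zero_iff.mpr (hv i))
  have hMunit : IsUnit M := hMD ▸ hDunit.mul hNunit
  constructor
  · -- linear independence
    have hrows : LinearIndependent ℝ (fun i => M i) :=
      Matrix.linearIndependent_rows_iff_isUnit.mpr hMunit
    let f : EuclideanSpace ℝ (Fin n) →ₗ[ℝ] (Fin n → ℝ) :=
      (WithLp.linearEquiv 2 ℝ (Fin n → ℝ)).toLinearMap.comp e.repr.toLinearEquiv.toLinearMap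
    have : (fun i => M i) = f ∘ v := rfl
    exact LinearIndependent.of_comp f (this ▸ hrows)
  · -- determinant bound
    have hinv : ‖((U⁻¹ : (Matrix (Fin n) (Fin n) ℝ)ˣ) : Matrix (Fin n) (Fin n) ℝ)‖ ≤ 2 := by
      have h1 : ((U⁻¹ : (Matrix (Fin n) (Fin n) ℝ)ˣ) : Matrix (Fin n) (Fin n) ℝ)
          = ∑' k : ℕ, (-E) ^ k := rfl
      have hone : ‖(1 : Matrix (Fin n) (Fin n) ℝ)‖ ≤ 1 := by
        rw [Matrix.cstar_norm_def, map_one]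
        exact ContinuousLinearMap.norm_id_le
      have h2 := tsum_geometric_le_of_norm_lt_one (-E) hE1
      rw [← h1] at h2
      have h3 : (1 - ‖-E‖)⁻¹ ≤ 2 := by
        rw [norm_neg]
        have h4 : (1:ℝ)/2 ≤ 1 - ‖E‖ := by linarith
        calc (1 - ‖E‖)⁻¹ ≤ ((1:ℝ)/2)⁻¹ := by
              apply inv_anti₀ (by norm_num) h4
          _ = 2 := by norm_num
      linarith
    have hentry : ∀ i j, |((U⁻¹ : (Matrix (Fin n) (Fin n) ℝ)ˣ) : Matrix (Fin n) (Fin n) ℝ) i j|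
        ≤ 2 := fun i j => le_trans (entry_abs_le_l2_opNorm _ i j) hinv
    have hdetinv : |((U⁻¹ : (Matrix (Fin n) (Fin n) ℝ)ˣ) : Matrix (Fin n) (Fin n) ℝ).det|
        ≤ (n.factorial : ℝ) * 2 ^ n := by
      have h5 := Matrix.det_le (abv := (AbsoluteValue.abs : AbsoluteValue ℝ ℝ)) (x := (2:ℝ)) hentry
      rw [Fintype.card_fin, nsmul_eq_mul] at h5
      exact h5
    have hdet1 : N.det * ((U⁻¹ : (Matrix (Fin n) (Fin n) ℝ)ˣ) : Matrix (Fin n) (Fin n) ℝ).det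
        = 1 := by
      rw [← Matrix.det_mul, ← hUval, Units.mul_inv, Matrix.det_one]
    have hdetNpos : (0:ℝ) < |N.det| := by
      rw [abs_pos]
      intro h0
      rw [h0, zero_mul] at hdet1
      exact zero_ne_one hdet1
    have hdetN : ((n.factorial : ℝ) * 2 ^ n)⁻¹ ≤ |N.det| := by
      have habs : |N.det| * |((U⁻¹ : (Matrix (Fin n) (Fin n) ℝ)ˣ) : Matrix (Fin n) (Fin n) ℝ).det|
          = 1 := by rw [← abs_mul, hdet1, abs_one]
      have hpos2 : (0:ℝ) < |((U⁻¹ : (Matrix (Fin n) (Fin n) ℝ)ˣ) :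
          Matrix (Fin n) (Fin n) ℝ).det| := by
        by_contra h
        push_neg at h
        have h0 : |((U⁻¹ : (Matrix (Fin n) (Fin n) ℝ)ˣ) :
            Matrix (Fin n) (Fin n) ℝ).det| = 0 := le_antisymm h (abs_nonneg _)
        rw [h0, mul_zero] at habs; exact zero_ne_one habs
      rw [inv_le_iff_one_le_mul₀ (by positivity)]
      calc (1:ℝ) = |N.det| * |((U⁻¹ : (Matrix (Fin n) (Fin n) ℝ)ˣ) :
            Matrix (Fin n) (Fin n) ℝ).det| := habs.symm
        _ ≤ |N.det| * ((n.factorial : ℝ) * 2 ^ n) :=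
            mul_le_mul_of_nonneg_left hdetinv (abs_nonneg _)
    have hdetM : M.det = (∏ i, ‖v i‖) * N.det := by
      rw [hMD, Matrix.det_mul, Matrix.det_diagonal]
    calc ((n.factorial : ℝ) * 2 ^ n)⁻¹ * ∏ i, ‖v i‖
        ≤ |N.det| * ∏ i, ‖v i‖ :=
          mul_le_mul_of_nonneg_right hdetN (Finset.prod_nonneg fun i _ => norm_nonneg _)
      _ = |M.det| := by
          rw [hdetM, abs_mul, abs_of_nonneg (Finset.prod_nonneg fun i _ => norm_nonneg _)]
          ring
end
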